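/- arXiv:gr-qc/9411007 — 3 statements merged into one kernel-verified Lean document; each statement's English description precedes it below -/
import Mathlib

section
/- Under the endpoint-compatibility hypotheses, the path map Φ is gauge-equivariant: for every g ∈ G^{V₂} and every A ∈ G^{E₂}, Φ(g·A) = (g∘j)·Φ(A), where (g·A)(f) = g(t₂(f))·A(f)·g(s₂(f))⁻¹ on G^{E₂} and ((g∘j)·B)(e) = g(j(t₁(e)))·B(e)·g(j(s₁(e)))⁻¹ on G^{E₁}. -/
open MeasureTheory

/-- The gauge action of `g : V → G` on connections `A : E → G`:
`(g·A)(e) = g(t(e))·A(e)·g(s(e))⁻¹`. -/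
def gaugeAct {V E G : Type*} [Group G] (s t : E → V) (g : V → G) (A : E → G) : E → G :=
  fun e => g (t e) * A e * (g (s e))⁻¹

/-- The path map: `Φ(A)(e) = A(f_n)^{σ_n} ⋯ A(f_1)^{σ_1}` where
`p e = [(f₁,σ₁),…,(f_n,σ_n)]` and `true` stands for the sign `+1`. -/
def pathMap {E₁ E₂ G : Type*} [Group G] (p : E₁ → List (E₂ × Bool)) (A : E₂ → G) :
    E₁ → G :=
  fun e => (((p e).map fun q => if q.2 then A q.1 else (A q.1)⁻¹).reverse).prod

/-- The starting vertex `start(f,σ)` of a signed edge. -/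
def sgnSource {V E : Type*} (s t : E → V) (q : E × Bool) : V := if q.2 then s q.1 else t q.1

/-- The ending vertex `end(f,σ)` of a signed edge. -/
def sgnTarget {V E : Type*} (s t : E → V) (q : E × Bool) : V := if q.2 then t q.1 else s q.1

lemma pathMap_aux {G V₂ E₂ : Type*} [Group G] (s₂ t₂ : E₂ → V₂) (g : V₂ → G) (A : E₂ → G) :
    ∀ (l : List (E₂ × Bool)) (h : l ≠ []),
      l.Chain' (fun q q' => sgnTarget s₂ t₂ q = sgnSource s₂ t₂ q') →
      ((l.map fun q => if q.2 then gaugeAct s₂ t₂ g A q.1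
          else (gaugeAct s₂ t₂ g A q.1)⁻¹).reverse).prod =
        g (sgnTarget s₂ t₂ (l.getLast h)) *
          ((l.map fun q => if q.2 then A q.1 else (A q.1)⁻¹).reverse).prod *
          (g (sgnSource s₂ t₂ (l.head h)))⁻¹ := by
  intro l
  induction l with
  | nil => intro h; exact absurd rfl h
  | cons q l ih =>
    intro _ hch
    rcases eq_or_ne l [] with rfl | hl
    · simp only [List.map_cons, List.map_nil, List.reverse_cons, List.reverse_nil,
        List.getLast_singleton, List.head_cons]
      rcases q with ⟨f, b⟩
      cases b <;> simp [gaugeAct, sgnSource, sgnTarget, mul_assoc]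
    · have hch' : l.Chain' (fun q q' => sgnTarget s₂ t₂ q = sgnSource s₂ t₂ q') :=
        (List.isChain_cons.mp hch).2
      have hlink : sgnTarget s₂ t₂ q = sgnSource s₂ t₂ (l.head hl) := by
        have := (List.isChain_cons.mp hch).1
        exact this (l.head hl) (List.head?_eq_head hl)
      have ihl := ih hl hch'
      have hq : (if q.2 then gaugeAct s₂ t₂ g A q.1 else (gaugeAct s₂ t₂ g A q.1)⁻¹) =
          g (sgnTarget s₂ t₂ q) * (if q.2 then A q.1 else (A q.1)⁻¹) *
            (g (sgnSource s₂ t₂ q))⁻¹ := by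
        rcases q with ⟨f, b⟩
        cases b <;> simp [gaugeAct, sgnSource, sgnTarget, mul_assoc]
      simp only [List.map_cons, List.reverse_cons, List.prod_append, List.prod_cons,
        List.prod_nil, mul_one, List.getLast_cons hl, List.head_cons]
      rw [ihl, hq, hlink]
      group

/-- Under the endpoint-compatibility hypotheses, the path map is gauge-equivariant:
`Φ(g·A) = (g∘j)·Φ(A)` for every `g ∈ G^{V₂}` and `A ∈ G^{E₂}`. -/
theorem stmt6 {G : Type*} [Group G]
    {V₁ E₁ V₂ E₂ : Type*} [Fintype V₁] [Fintype E₁] [Fintype V₂] [Fintype E₂]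
    (s₁ t₁ : E₁ → V₁) (s₂ t₂ : E₂ → V₂) (j : V₁ → V₂) (hj : Function.Injective j)
    (p : E₁ → List (E₂ × Bool))
    (hne : ∀ e, p e ≠ [])
    (hnodup : ∀ e, ((p e).map Prod.fst).Nodup)
    (hdisj : ∀ e e', e ≠ e' → ∀ f, f ∈ (p e).map Prod.fst → f ∉ (p e').map Prod.fst)
    (hstart : ∀ e, ∀ he : p e ≠ [], sgnSource s₂ t₂ ((p e).head he) = j (s₁ e))
    (hend : ∀ e, ∀ he : p e ≠ [], sgnTarget s₂ t₂ ((p e).getLast he) = j (t₁ e))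
    (hchain : ∀ e, (p e).Chain' fun q q' => sgnTarget s₂ t₂ q = sgnSource s₂ t₂ q') :
    ∀ (g : V₂ → G) (A : E₂ → G),
      pathMap p (gaugeAct s₂ t₂ g A) = gaugeAct s₁ t₁ (g ∘ j) (pathMap p A) := by
  intro g A
  funext e
  have := pathMap_aux s₂ t₂ g A (p e) (hne e) (hchain e)
  rw [hstart e (hne e), hend e (hne e)] at this
  simp only [pathMap, gaugeAct, Function.comp_apply] at this ⊢
  exact this
end

section
/- The U(1) spin network states span the gauge-invariant subspace: the closed linear span in L²(T^E) of the character functions χ_n with n divergence-free equals the closed subspace of gauge-invariant elements {f ∈ L²(T^E) : f∘(g·) = f for every g ∈ T^V}, where (g·A)(e) = g(t(e)) + A(e) − g(s(e)). -/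
open MeasureTheory

theorem Real.fact_zero_lt_one : Fact ((0 : ℝ) < 1) :=
  ⟨zero_lt_one⟩

attribute [local instance] Real.fact_zero_lt_one

/-- The character function `χ_n(A) = ∏_e exp(2πi n(e) A(e))` on `T^E`, `T = ℝ/ℤ`. -/
noncomputable def chi {E : Type*} [Fintype E] (n : E → ℤ) (A : E → UnitAddCircle) : ℂ :=
  ∏ e, fourier (n e) (A e)

/-- The additive gauge action of `g : V → T` on `A : E → T`:
`(g·A)(e) = g(t(e)) + A(e) − g(s(e))`. -/
def gaugeActAdd {V E M : Type*} [AddCommGroup M] (s t : E → V) (g : V → M) (A : E → M) :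
    E → M :=
  fun e => g (t e) + A e - g (s e)

/-- `n : E → ℤ` is divergence-free: at every vertex `v`,
`Σ_{e : s(e)=v} n(e) = Σ_{e : t(e)=v} n(e)`. -/
def DivFree {V E : Type*} [Fintype E] [DecidableEq V] (s t : E → V) (n : E → ℤ) : Prop :=
  ∀ v : V, ∑ e ∈ Finset.univ.filter fun e => s e = v, n e
    = ∑ e ∈ Finset.univ.filter fun e => t e = v, n e

/-!
The characters `χ_n` form a Hilbert basis of `L²(T^E)`. The gauge action of `g` is translation
by the pure-gauge connection `dg(e) = g(t e) - g(s e)`, and `χ_n` is an eigenvector of it with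
eigenvalue `χ_n(dg) = ∏_v e(div n (v) · g(v))`. Hence `χ_n` is invariant when `n` is
divergence-free, which gives one inclusion. Conversely, if `div n (v) = m ≠ 0`, the gauge
transformation putting `1/(2m)` at `v` has eigenvalue `-1` on `χ_n`; since it preserves inner
products, `⟪χ_n, h⟫ = -⟪χ_n, h⟫ = 0` for every invariant `h`, so the Fourier expansion of `h`
only involves divergence-free `n`.
-/

open MeasureTheory Submodule Finset UnitAddTorus

local notation "L²(" α ")" => Lp ℂ 2 (volume : Measure α)

theorem HilbertBasis.mem_topologicalClosure_span_image {ι 𝕜 H : Type*} [RCLike 𝕜]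
    [NormedAddCommGroup H] [InnerProductSpace 𝕜 H] (b : HilbertBasis ι 𝕜 H) {S : Set ι}
    {x : H} (hx : ∀ i ∉ S, inner 𝕜 (b i) x = 0) : x ∈ (span 𝕜 (b '' S)).topologicalClosure := by
  refine mem_closure_of_tendsto (b.hasSum_repr x)
    (Filter.Eventually.of_forall fun _ => sum_mem fun i _ => ?_)
  by_cases hi : i ∈ S
  · exact smul_mem _ _ (subset_span ⟨i, hi, rfl⟩)
  · rw [b.repr_apply_apply, hx i hi, zero_smul]
    exact zero_mem _

theorem ContinuousLinearMap.apply_eq_self_of_mem_topologicalClosure_span {R M : Type*}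
    [Semiring R] [AddCommMonoid M] [Module R M] [TopologicalSpace M] [T2Space M]
    [ContinuousAdd M] [ContinuousConstSMul R M] (T : M →L[R] M) {S : Set M}
    (hS : ∀ x ∈ S, T x = x) {x : M} (hx : x ∈ (span R S).topologicalClosure) : T x = x :=
  topologicalClosure_minimal _
    (span_le.2 hS : span R S ≤ T.eqLocus (ContinuousLinearMap.id R M)) (T.isClosed_eqLocus _) hx

theorem fourier_sum {T : ℝ} {ι : Type*} (s : Finset ι) (k : ι → ℤ) (x : AddCircle T) :
    fourier (∑ i ∈ s, k i) x = ∏ i ∈ s, fourier (k i) x := by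
  classical
  induction s using Finset.induction_on with
  | empty => simp
  | insert a s ha ih => rw [sum_insert ha, prod_insert ha, fourier_add, ih]

theorem fourier_apply_add {T : ℝ} (k : ℤ) (x y : AddCircle T) :
    fourier k (x + y) = fourier k x * fourier k y := by
  rw [fourier_apply, fourier_apply, fourier_apply, smul_add, AddCircle.toCircle_add,
    Circle.coe_mul]

theorem fourier_apply_sub {T : ℝ} (k : ℤ) (x y : AddCircle T) :
    fourier k (x - y) = fourier k x * fourier (-k) y := by
  rw [fourier_apply, fourier_apply, fourier_apply, smul_sub, neg_smul, sub_eq_add_neg,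
    AddCircle.toCircle_add, Circle.coe_mul]

theorem chi_add {E : Type*} [Fintype E] (n : E → ℤ) (A B : E → UnitAddCircle) :
    chi n (A + B) = chi n A * chi n B := by
  simp only [chi, Pi.add_apply, fourier_apply_add, prod_mul_distrib]

namespace UnitAddTorus

variable {d : Type*} [Fintype d]

theorem volume_eq_pi_haarAddCircle :
    (volume : Measure (UnitAddTorus d)) = Measure.pi fun _ => AddCircle.haarAddCircle := by
  simp [volume_pi, AddCircle.volume_eq_smul_haarAddCircle]

section

variable {μ : Measure (UnitAddTorus d)} [IsFiniteMeasure μ]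

theorem orthonormal_toLp_mFourier_of_eq
    (hμ : μ = Measure.pi fun _ => AddCircle.haarAddCircle) :
    Orthonormal ℂ fun n : d → ℤ => (mFourier n).toLp 2 μ ℂ := by
  subst hμ
  exact orthonormal_mFourier

theorem span_toLp_mFourier_closure_eq_top_of_eq
    (hμ : μ = Measure.pi fun _ => AddCircle.haarAddCircle) :
    (span ℂ (Set.range fun n : d → ℤ => (mFourier n).toLp 2 μ ℂ)).topologicalClosure = ⊤ := by
  subst hμ
  exact span_mFourierLp_closure_eq_top (by simp)

end

/-- `volume` on `UnitAddCircle` is `ENNReal.ofReal 1 • haarAddCircle`, only propositionally equal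
to the measure `haarAddCircle` underlying `mFourierBasis`, hence this copy of it. -/
noncomputable def volumeFourierBasis : HilbertBasis (d → ℤ) ℂ (L²(UnitAddTorus d)) :=
  HilbertBasis.mk (orthonormal_toLp_mFourier_of_eq volume_eq_pi_haarAddCircle)
    (span_toLp_mFourier_closure_eq_top_of_eq volume_eq_pi_haarAddCircle).ge

theorem coeFn_volumeFourierBasis (n : d → ℤ) : volumeFourierBasis n =ᵐ[volume] chi n := by
  rw [volumeFourierBasis, HilbertBasis.coe_mk]
  exact ContinuousMap.coeFn_toLp _ _

end UnitAddTorus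

section Gauge

variable {V E : Type*} (s t : E → V)

def pureGauge {M : Type*} [AddCommGroup M] (g : V → M) : E → M :=
  fun e => g (t e) - g (s e)

theorem gaugeActAdd_eq_pureGauge_add {M : Type*} [AddCommGroup M] (g : V → M) (A : E → M) :
    gaugeActAdd s t g A = pureGauge s t g + A := by
  funext e
  simp only [gaugeActAdd, pureGauge, Pi.add_apply]
  abel

variable [Fintype E]

theorem measurePreserving_gaugeActAdd (g : V → UnitAddCircle) :
    MeasurePreserving (gaugeActAdd s t g) (volume : Measure (E → UnitAddCircle)) volume := by
  rw [show gaugeActAdd s t g = (pureGauge s t g + ·) from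
    funext (gaugeActAdd_eq_pureGauge_add s t g)]
  exact measurePreserving_add_left _ _

noncomputable def gaugeLp (g : V → UnitAddCircle) :
    L²(E → UnitAddCircle) →ₗᵢ[ℂ] L²(E → UnitAddCircle) :=
  Lp.compMeasurePreservingₗᵢ ℂ (gaugeActAdd s t g) (measurePreserving_gaugeActAdd s t g)

variable {s t}

theorem coeFn_gaugeLp (g : V → UnitAddCircle) (h : L²(E → UnitAddCircle)) :
    gaugeLp s t g h =ᵐ[volume] ⇑h ∘ gaugeActAdd s t g :=
  Lp.coeFn_compMeasurePreserving h _

theorem gaugeLp_eq_self_iff {g : V → UnitAddCircle} {h : L²(E → UnitAddCircle)} :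
    gaugeLp s t g h = h ↔ ⇑h ∘ gaugeActAdd s t g =ᵐ[volume] ⇑h :=
  Lp.ext_iff.trans (coeFn_gaugeLp g h).congr_left

theorem gaugeLp_volumeFourierBasis (g : V → UnitAddCircle) (n : E → ℤ) :
    gaugeLp s t g (volumeFourierBasis n) = chi n (pureGauge s t g) • volumeFourierBasis n := by
  have hb := coeFn_volumeFourierBasis n
  refine Lp.ext ?_
  filter_upwards [coeFn_gaugeLp g (volumeFourierBasis n),
    (measurePreserving_gaugeActAdd s t g).quasiMeasurePreserving.ae_eq_comp hb,
    Lp.coeFn_smul (chi n (pureGauge s t g)) (volumeFourierBasis n), hb] with A h1 h2 h3 h4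
  rw [h1, h2, h3, Pi.smul_apply, h4, Function.comp_apply,
    gaugeActAdd_eq_pureGauge_add, chi_add, smul_eq_mul]

theorem inner_volumeFourierBasis_eq_zero {g : V → UnitAddCircle} {n : E → ℤ}
    (hg : chi n (pureGauge s t g) ≠ 1) {h : L²(E → UnitAddCircle)}
    (hh : gaugeLp s t g h = h) : inner ℂ (volumeFourierBasis n) h = 0 := by
  have hconj : starRingEnd ℂ (chi n (pureGauge s t g)) ≠ 1 := by
    rwa [Ne, map_eq_one_iff _ (RingHom.injective _)]
  have heig : inner ℂ (volumeFourierBasis n) h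
      = starRingEnd ℂ (chi n (pureGauge s t g)) * inner ℂ (volumeFourierBasis n) h := by
    rw [← inner_smul_left, ← gaugeLp_volumeFourierBasis, ← (gaugeLp s t g).inner_map_map, hh]
  by_contra hne
  exact hconj ((mul_eq_right₀ hne).1 heig.symm)

variable (s t) [DecidableEq V]

def divergence (n : E → ℤ) (v : V) : ℤ :=
  ∑ e ∈ univ.filter (t · = v), n e - ∑ e ∈ univ.filter (s · = v), n e

variable {s t} in
theorem divFree_iff_divergence_eq_zero {n : E → ℤ} :
    DivFree s t n ↔ ∀ v, divergence s t n v = 0 :=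
  forall_congr' fun v => by rw [divergence, sub_eq_zero, eq_comm]

theorem prod_fourier_comp [Fintype V] (f : E → V) (k : E → ℤ) (g : V → UnitAddCircle) :
    ∏ e, fourier (k e) (g (f e)) = ∏ v, fourier (∑ e ∈ univ.filter (f · = v), k e) (g v) := by
  rw [← prod_fiberwise univ f]
  refine prod_congr rfl fun v _ => ?_
  rw [fourier_sum]
  exact prod_congr rfl fun e he => by rw [(mem_filter.1 he).2]

theorem chi_pureGauge [Fintype V] (n : E → ℤ) (g : V → UnitAddCircle) :
    chi n (pureGauge s t g) = ∏ v, fourier (divergence s t n v) (g v) := by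
  calc chi n (pureGauge s t g)
      = ∏ e, fourier (n e) (g (t e)) * fourier (-n e) (g (s e)) :=
        prod_congr rfl fun e _ => fourier_apply_sub _ _ _
    _ = ∏ v, fourier (∑ e ∈ univ.filter (t · = v), n e) (g v)
          * fourier (∑ e ∈ univ.filter (s · = v), -n e) (g v) := by
        rw [prod_mul_distrib, prod_fourier_comp t n, prod_fourier_comp s (-n ·),
          prod_mul_distrib]
    _ = ∏ v, fourier (divergence s t n v) (g v) :=
        prod_congr rfl fun v _ => by
          rw [← fourier_add, divergence, sum_neg_distrib, sub_eq_add_neg]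

variable {s t}

theorem chi_pureGauge_eq_one [Fintype V] {n : E → ℤ} (hn : DivFree s t n)
    (g : V → UnitAddCircle) : chi n (pureGauge s t g) = 1 := by
  rw [chi_pureGauge]
  exact prod_eq_one fun v _ => by rw [divFree_iff_divergence_eq_zero.1 hn v, fourier_zero]

theorem exists_chi_pureGauge_ne_one [Fintype V] {n : E → ℤ} (hn : ¬DivFree s t n) :
    ∃ g : V → UnitAddCircle, chi n (pureGauge s t g) ≠ 1 := by
  obtain ⟨v, hv⟩ := not_forall.1 (mt divFree_iff_divergence_eq_zero.2 hn)
  set m := divergence s t n v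
  have half_period : fourier m ((1 / 2 / m : ℝ) : UnitAddCircle) = -1 := by
    simpa [fourier_eval_zero] using fourier_add_half_inv_index hv one_pos 0
  refine ⟨Pi.single v ((1 / 2 / m : ℝ) : UnitAddCircle), ?_⟩
  rw [chi_pureGauge, prod_eq_single v
    (fun w _ hw => by rw [Pi.single_eq_of_ne hw, fourier_eval_zero])
    (fun h => (h (mem_univ v)).elim), Pi.single_eq_same, half_period]
  norm_num

end Gauge

/-- The U(1) spin network states span the gauge-invariant subspace: the closed linear
span of the characters `χ_n` with `n` divergence-free equals the closed subspace of
gauge-invariant elements of `L²(T^E)`. -/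
theorem stmt12 {V E : Type*} [Fintype V] [Fintype E] [DecidableEq V] (s t : E → V) :
    ∃ F : (E → ℤ) → Lp ℂ 2 (Measure.pi fun _ : E => (volume : Measure UnitAddCircle)),
      (∀ n, ⇑(F n) =ᵐ[Measure.pi fun _ : E => (volume : Measure UnitAddCircle)] chi n) ∧
      ((Submodule.span ℂ (F '' {n | DivFree s t n})).topologicalClosure : Set _) =
        {h : Lp ℂ 2 (Measure.pi fun _ : E => (volume : Measure UnitAddCircle)) |
          ∀ g : V → UnitAddCircle,
            ⇑h ∘ gaugeActAdd s t g
              =ᵐ[Measure.pi fun _ : E => (volume : Measure UnitAddCircle)] ⇑h} := by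
  refine ⟨volumeFourierBasis, coeFn_volumeFourierBasis,
    Set.ext fun h => ⟨fun hh g => ?_, fun hh => ?_⟩⟩
  · refine gaugeLp_eq_self_iff.1 <|
      (gaugeLp s t g).toContinuousLinearMap.apply_eq_self_of_mem_topologicalClosure_span ?_ hh
    rintro - ⟨n, hn, rfl⟩
    simpa [chi_pureGauge_eq_one hn] using gaugeLp_volumeFourierBasis (s := s) (t := t) g n
  · refine volumeFourierBasis.mem_topologicalClosure_span_image fun n hn => ?_
    obtain ⟨g, hg⟩ := exists_chi_pureGauge_ne_one hn
    exact inner_volumeFourierBasis_eq_zero hg (gaugeLp_eq_self_iff.2 (hh g))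
end

section
/- Let Q be the orbit space of the gauge action of G^V on G^E, with quotient map ρ : G^E → Q, equipped with the quotient σ-algebra (a subset of Q is measurable iff its preimage under ρ is measurable) and the pushforward measure ρ_*(μ^E). Then f ↦ f∘ρ is a linear isometry from L²(Q, ρ_*(μ^E)) into L²(G^E, μ^E) whose range is exactly the closed subspace of gauge-invariant elements {h ∈ L²(G^E, μ^E) : h∘(g·) = h for every g ∈ G^V}. -/
open MeasureTheory

namespace MeasureTheory.Measure

lemma isMulRightInvariant_of_isProbabilityMeasure {G : Type*} [Group G] [TopologicalSpace G]
    [IsTopologicalGroup G] [LocallyCompactSpace G] [MeasurableSpace G] [BorelSpace G]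
    (μ : Measure G) [μ.IsHaarMeasure] [IsProbabilityMeasure μ] :
    μ.IsMulRightInvariant where
  map_mul_right_eq_self g :=
    haveI := isProbabilityMeasure_map (μ := μ) (measurable_mul_const g).aemeasurable
    isHaarMeasure_eq_of_isProbabilityMeasure _ μ

end MeasureTheory.Measure

section Averaging

variable {K α F : Type*} [MeasurableSpace K] [MeasurableSpace α]
  {κ : Measure K} {ν : Measure α} {act : K → α → α}

lemma ae_ae_apply_eq_of_forall_comp_ae_eq [SFinite κ] [SFinite ν]
    [TopologicalSpace F] [TopologicalSpace.MetrizableSpace F]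
    (hact : Measurable fun p : K × α => act p.1 p.2) {h : α → F} (hh : StronglyMeasurable h)
    (hinv : ∀ g, h ∘ act g =ᵐ[ν] h) :
    ∀ᵐ x ∂ν, ∀ᵐ g ∂κ, h (act g x) = h x := by
  refine (Measure.ae_ae_comm ?_).1 (Filter.Eventually.of_forall hinv)
  exact (hh.comp_measurable hact).measurableSet_eq_fun (hh.comp_measurable measurable_snd)

variable [Group K] [MeasurableMul K] [NormedAddCommGroup F] [NormedSpace ℝ F] [CompleteSpace F]

theorem exists_stronglyMeasurable_invariant_ae_eq [IsProbabilityMeasure κ]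
    [κ.IsMulRightInvariant] [SFinite ν]
    (hact_mul : ∀ g g₀ x, act g (act g₀ x) = act (g * g₀) x)
    (hact : Measurable fun p : K × α => act p.1 p.2)
    (hact_qmp : ∀ g, Measure.QuasiMeasurePreserving (act g) ν ν)
    {h : α → F} (hh : AEStronglyMeasurable h ν) (hinv : ∀ g, h ∘ act g =ᵐ[ν] h) :
    ∃ H : α → F, StronglyMeasurable H ∧ (∀ g x, H (act g x) = H x) ∧ H =ᵐ[ν] h := by
  set h' := hh.mk h
  have hinv' : ∀ g, h' ∘ act g =ᵐ[ν] h' := fun g =>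
    ((hact_qmp g).ae_eq_comp hh.ae_eq_mk.symm).trans ((hinv g).trans hh.ae_eq_mk)
  refine ⟨fun x => ∫ g, h' (act g x) ∂κ,
    (hh.stronglyMeasurable_mk.comp_measurable hact).integral_prod_left' (μ := κ),
    fun g₀ x => ?_, ?_⟩
  · simp only [hact_mul]
    exact integral_mul_right_eq_self (fun g => h' (act g x)) g₀
  · filter_upwards [ae_ae_apply_eq_of_forall_comp_ae_eq (κ := κ) hact hh.stronglyMeasurable_mk
      hinv', hh.ae_eq_mk] with x hx hhx
    rw [integral_congr_ae hx, integral_const, probReal_univ, one_smul, hhx]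

end Averaging

lemma MeasureTheory.measurePreserving_quotient_mk {α : Type*} [MeasurableSpace α] (r : Setoid α)
    (ν : Measure α) : MeasurePreserving (Quotient.mk r) ν (ν.map (Quotient.mk r)) :=
  ⟨measurable_quotient_mk'', rfl⟩

namespace MeasureTheory.Lp

variable {α β F : Type*} [MeasurableSpace α] [MeasurableSpace β] [NormedAddCommGroup F]
  {p : ENNReal} {ν : Measure α}

lemma compMeasurePreserving_comp_ae_eq {νb : Measure β} {f : α → β}
    (hf : MeasurePreserving f ν νb) {φ : α → α} (hφ : Measure.QuasiMeasurePreserving φ ν ν)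
    (hfφ : f ∘ φ = f) (u : Lp F p νb) :
    ⇑(compMeasurePreserving f hf u) ∘ φ =ᵐ[ν] compMeasurePreserving f hf u :=
  calc ⇑(compMeasurePreserving f hf u) ∘ φ =ᵐ[ν] (u ∘ f) ∘ φ :=
        hφ.ae_eq_comp (coeFn_compMeasurePreserving u hf)
    _ = u ∘ f := by rw [Function.comp_assoc, hfφ]
    _ =ᵐ[ν] compMeasurePreserving f hf u := (coeFn_compMeasurePreserving u hf).symm

lemma mem_range_compMeasurePreserving_quotient_mk {r : Setoid α} {H : α → F}
    (hH : StronglyMeasurable H) (hHr : ∀ a b, r a b → H a = H b) {u : Lp F p ν}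
    (hHu : H =ᵐ[ν] u) :
    u ∈ Set.range (compMeasurePreserving (Quotient.mk r) (measurePreserving_quotient_mk r ν)) := by
  have hρ := measurePreserving_quotient_mk r ν
  borelize F
  set HQ : Quotient r → F := Quotient.lift H hHr
  have hHQ : AEStronglyMeasurable HQ (ν.map (Quotient.mk r)) :=
    (stronglyMeasurable_iff_measurable_separable.2
      ⟨(measurable_from_quotient (f := HQ)).2 hH.measurable,
        by simpa [HQ] using hH.isSeparable_range⟩).aestronglyMeasurable
  have hmem : MemLp HQ p (ν.map (Quotient.mk r)) :=
    (memLp_map_measure_iff hHQ hρ.measurable.aemeasurable).2 ((Lp.memLp u).ae_eq hHu.symm)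
  refine ⟨hmem.toLp HQ, Lp.ext ?_⟩
  calc ⇑(compMeasurePreserving (Quotient.mk r) hρ (hmem.toLp HQ))
      =ᵐ[ν] hmem.toLp HQ ∘ Quotient.mk r := coeFn_compMeasurePreserving _ hρ
    _ =ᵐ[ν] HQ ∘ Quotient.mk r := hρ.quasiMeasurePreserving.ae_eq_comp hmem.coeFn_toLp
    _ =ᵐ[ν] u := hHu

end MeasureTheory.Lp

section Gauge

variable {V E G : Type*} [Group G] (s t : E → V)

lemma gaugeAct_gaugeAct (g g₀ : V → G) (A : E → G) :
    gaugeAct s t g (gaugeAct s t g₀ A) = gaugeAct s t (g * g₀) A := by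
  funext e
  simp only [gaugeAct, Pi.mul_apply, mul_inv_rev]
  group

variable [MeasurableSpace G]

lemma measurable_gaugeAct_uncurry [MeasurableMul₂ G] [MeasurableInv G] :
    Measurable fun p : (V → G) × (E → G) => gaugeAct s t p.1 p.2 := by
  refine measurable_pi_lambda _ fun e => ?_
  exact (((measurable_pi_apply (t e)).comp measurable_fst).mul
    ((measurable_pi_apply e).comp measurable_snd)).mul
    ((measurable_pi_apply (s e)).comp measurable_fst).inv

lemma measurePreserving_gaugeAct [Fintype E] [MeasurableMul G] (μ : Measure G) [SigmaFinite μ]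
    [μ.IsMulLeftInvariant] [μ.IsMulRightInvariant] (g : V → G) :
    MeasurePreserving (gaugeAct s t g) (Measure.pi fun _ : E => μ) (Measure.pi fun _ : E => μ) :=
  measurePreserving_pi _ _ fun e =>
    (measurePreserving_mul_right μ (g (s e))⁻¹).comp (measurePreserving_mul_left μ (g (t e)))

end Gauge

/-- Let `Q = Quotient r` be the orbit space of the gauge action, with the quotient
σ-algebra (Mathlib's `Quotient.instMeasurableSpace`, in which a set is measurable iff its
preimage under the quotient map is) and the pushforward measure. Then `f ↦ f∘ρ` is a
linear isometry of `L²(Q)` into `L²(G^E, μ^E)` whose range is exactly the closed subspace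
of gauge-invariant elements. -/
theorem stmt15 {G : Type*} [Group G] [TopologicalSpace G] [IsTopologicalGroup G]
    [CompactSpace G] [SecondCountableTopology G] [MeasurableSpace G] [BorelSpace G]
    (μ : Measure G) [μ.IsHaarMeasure] [IsProbabilityMeasure μ]
    {V E : Type*} [Fintype V] [Fintype E] (s t : E → V)
    (r : Setoid (E → G))
    (hr : ∀ A B : E → G, r A B ↔ ∃ g : V → G, B = gaugeAct s t g A) :
    ∃ T : Lp ℂ 2 (Measure.map (Quotient.mk r) (Measure.pi fun _ : E => μ)) →ₗᵢ[ℂ]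
        Lp ℂ 2 (Measure.pi fun _ : E => μ),
      (∀ f, ⇑(T f) =ᵐ[Measure.pi fun _ : E => μ] ⇑f ∘ Quotient.mk r) ∧
      Set.range (fun f => T f) =
        {h : Lp ℂ 2 (Measure.pi fun _ : E => μ) |
          ∀ g : V → G, ⇑h ∘ gaugeAct s t g =ᵐ[Measure.pi fun _ : E => μ] ⇑h} := by
  have := μ.isMulRightInvariant_of_isProbabilityMeasure
  have hρ := measurePreserving_quotient_mk r (Measure.pi fun _ : E => μ)
  have hgauge (g : V → G) := (measurePreserving_gaugeAct s t μ g).quasiMeasurePreserving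
  refine ⟨Lp.compMeasurePreservingₗᵢ ℂ _ hρ, fun f => Lp.coeFn_compMeasurePreserving f hρ, ?_⟩
  ext h
  constructor
  · rintro ⟨f, rfl⟩ g
    refine Lp.compMeasurePreserving_comp_ae_eq hρ (hgauge g) (funext fun A => ?_) f
    exact (Quotient.sound ((hr A _).2 ⟨g, rfl⟩)).symm
  · intro hinv
    obtain ⟨H, hHm, hHinv, hHh⟩ := exists_stronglyMeasurable_invariant_ae_eq
      (κ := Measure.pi fun _ : V => μ) (gaugeAct_gaugeAct s t)
      (measurable_gaugeAct_uncurry s t) hgauge (Lp.aestronglyMeasurable h) hinv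
    refine Lp.mem_range_compMeasurePreserving_quotient_mk hHm (fun A B hAB => ?_) hHh
    obtain ⟨g, rfl⟩ := (hr A B).1 hAB
    exact (hHinv g A).symm
end
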